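/- Let K > 0 and let f : ℝ → ℝ satisfy condition (2.1). Then for every x ≠ 0 the maximal function M f is differentiable at x with (M f)'(x) = (f(x) − M f(x)) / (x − a(x)). -/

import Mathlib

open MeasureTheory Set Filter
open scoped ENNReal Topology

/-- Uncentered Hardy–Littlewood maximal function (without absolute values):
`M f x = sup_{a < x < b} (1/(b-a)) ∫_a^b f`. -/
noncomputable def maxFn (f : ℝ → ℝ) (x : ℝ) : ℝ :=
  sSup {z : ℝ | ∃ a b : ℝ, a < x ∧ x < b ∧ z = (b - a)⁻¹ * ∫ y in a..b, f y}

/-- The variation of `g` on an open set `U`: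
`var_U(g) = sup { -∫_U g φ' : φ ∈ C¹_c(U), |φ| ≤ 1 }`, valued in `ℝ≥0∞`. -/
noncomputable def evar (U : Set ℝ) (g : ℝ → ℝ) : ℝ≥0∞ :=
  ⨆ (φ : ℝ → ℝ) (_ : ContDiff ℝ 1 φ ∧ HasCompactSupport φ ∧ tsupport φ ⊆ U ∧ ∀ x, |φ x| ≤ 1),
    ENNReal.ofReal (-∫ x in U, g x * deriv φ x)

/-- `g` is the weak derivative of `f` on `ℝ`. -/
def HasWeakDeriv (f g : ℝ → ℝ) : Prop :=
  LocallyIntegrable f volume ∧ LocallyIntegrable g volume ∧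
    ∀ φ : ℝ → ℝ, ContDiff ℝ 1 φ → HasCompactSupport φ →
      ∫ x, f x * deriv φ x = -∫ x, g x * φ x

/-- Condition (2.1): for all `x < y` with `0 ∉ (x,y)`,
`1/K ≤ −sign(x+y)·(f(y)−f(x))/(y−x) ≤ K`. -/
def Cond21 (K : ℝ) (f : ℝ → ℝ) : Prop :=
  ∀ x y : ℝ, x < y → (0:ℝ) ∉ Set.Ioo x y →
    1 / K ≤ -Real.sign (x + y) * ((f y - f x) / (y - x)) ∧
      -Real.sign (x + y) * ((f y - f x) / (y - x)) ≤ K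

/-- `a` is the map assigning to each `x ≠ 0` the (unique) point `a x` on the other side of
the origin such that `M f x` equals the average of `f` over the interval between `a x` and `x`. -/
def IsArgOf (f : ℝ → ℝ) (a : ℝ → ℝ) : Prop :=
  ∀ x : ℝ, x ≠ 0 →
    ((0 < x → a x < 0) ∧ (x < 0 → 0 < a x)) ∧
    maxFn f x = (x - a x)⁻¹ * ∫ t in (a x)..x, f t

/-- `f` is twice differentiable on `ℝ \ {0}`. -/
def TwiceDiffOffZero (f : ℝ → ℝ) : Prop :=
  ∀ x : ℝ, x ≠ 0 → DifferentiableAt ℝ f x ∧ DifferentiableAt ℝ (deriv f) x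

variable {K : ℝ} {f : ℝ → ℝ}

lemma cond_neg (hK : 0 < K) (hf : Cond21 K f) {u v : ℝ} (huv : u < v) (hv : v ≤ 0) :
    (v - u) / K ≤ f v - f u ∧ f v - f u ≤ K * (v - u) := by
  have h0 : (0:ℝ) ∉ Set.Ioo u v := fun h => absurd h.2 (by linarith)
  have hs : u + v < 0 := by linarith
  have h := hf u v huv h0
  rw [Real.sign_of_neg hs] at h
  simp only [neg_neg, one_mul] at h
  have hvu : 0 < v - u := by linarith
  have h1 := (div_le_div_iff₀ hK hvu).mp h.1
  have h2 := (div_le_iff₀ hvu).mp h.2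
  constructor
  · rw [div_le_iff₀ hK]; linarith
  · linarith

lemma cond_pos (hK : 0 < K) (hf : Cond21 K f) {u v : ℝ} (huv : u < v) (hu : 0 ≤ u) :
    (v - u) / K ≤ f u - f v ∧ f u - f v ≤ K * (v - u) := by
  have h0 : (0:ℝ) ∉ Set.Ioo u v := fun h => absurd h.1 (by linarith)
  have hs : 0 < u + v := by linarith
  have h := hf u v huv h0
  rw [Real.sign_of_pos hs] at h
  have hvu : 0 < v - u := by linarith
  have e : -1 * ((f v - f u) / (v - u)) = (f u - f v) / (v - u) := by ring
  rw [e] at h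
  have h1 := (div_le_div_iff₀ hK hvu).mp h.1
  have h2 := (div_le_iff₀ hvu).mp h.2
  constructor
  · rw [div_le_iff₀ hK]; linarith
  · linarith

lemma lip2 (hK : 0 < K) (hf : Cond21 K f) {u v : ℝ} (huv : u < v) :
    |f v - f u| ≤ K * (v - u) := by
  rcases le_or_gt v 0 with hv | hv
  · obtain ⟨h1, h2⟩ := cond_neg hK hf huv hv
    have : 0 ≤ (v - u)/K := div_nonneg (by linarith) hK.le
    rw [abs_le]; constructor <;> nlinarith
  · rcases le_or_gt 0 u with hu | hu
    · obtain ⟨h1, h2⟩ := cond_pos hK hf huv hu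
      have : 0 ≤ (v - u)/K := div_nonneg (by linarith) hK.le
      rw [abs_le]; constructor <;> nlinarith
    · obtain ⟨h1, h2⟩ := cond_neg hK hf hu le_rfl
      obtain ⟨h3, h4⟩ := cond_pos hK hf hv le_rfl
      have p1 : 0 ≤ (0 - u)/K := div_nonneg (by linarith) hK.le
      have p2 : 0 ≤ (v - 0)/K := div_nonneg (by linarith) hK.le
      calc |f v - f u| ≤ |f v - f 0| + |f 0 - f u| := abs_sub_le _ _ _
        _ ≤ K * (v - 0) + K * (0 - u) := by
            gcongr <;> rw [abs_le] <;> constructor <;> linarith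
        _ = K * (v - u) := by ring

lemma lipf (hK : 0 < K) (hf : Cond21 K f) (s t : ℝ) : |f t - f s| ≤ K * |t - s| := by
  rcases lt_trichotomy s t with h | h | h
  · rw [abs_of_pos (by linarith : (0:ℝ) < t - s)]; exact lip2 hK hf h
  · simp [h]
  · rw [abs_sub_comm, abs_of_neg (by linarith : t - s < 0)]
    have := lip2 hK hf h
    linarith [lip2 hK hf h]

lemma f_le_f0 (hK : 0 < K) (hf : Cond21 K f) (t : ℝ) : f t ≤ f 0 := by
  rcases lt_trichotomy t 0 with h | h | h
  · have h1 := (cond_neg hK hf h le_rfl).1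
    have : 0 ≤ (0 - t)/K := div_nonneg (by linarith) hK.le
    linarith
  · simp [h]
  · have h1 := (cond_pos hK hf h le_rfl).1
    have : 0 ≤ (t - 0)/K := div_nonneg (by linarith) hK.le
    linarith

lemma inv_slope (hK : 0 < K) (hf : Cond21 K f) {u v : ℝ} (huv : u < v)
    (h0 : (0:ℝ) ∉ Set.Ioo u v) : v - u ≤ K * |f v - f u| := by
  rcases le_or_gt v 0 with hv | hv
  · have h := (cond_neg hK hf huv hv).1
    have hp : 0 ≤ (v - u)/K := div_nonneg (by linarith) hK.le
    rw [abs_of_nonneg (by linarith)]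
    rw [div_le_iff₀ hK] at h; linarith
  · rcases le_or_gt 0 u with hu | hu
    · have h := (cond_pos hK hf huv hu).1
      have hp : 0 ≤ (v - u)/K := div_nonneg (by linarith) hK.le
      rw [abs_of_nonpos (by linarith)]
      rw [div_le_iff₀ hK] at h; linarith
    · exact absurd ⟨hu, hv⟩ h0

lemma contf (hK : 0 < K) (hf : Cond21 K f) : Continuous f := by
  have : LipschitzWith ⟨K, hK.le⟩ f := by
    apply LipschitzWith.of_dist_le_mul
    intro x y
    rw [Real.dist_eq, Real.dist_eq]; exact lipf hK hf y x
  exact this.continuous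


noncomputable def Fint (f : ℝ → ℝ) (t : ℝ) : ℝ := ∫ s in (0:ℝ)..t, f s

noncomputable def Phi (f : ℝ → ℝ) (x α : ℝ) : ℝ := (x - α)⁻¹ * (Fint f x - Fint f α)

lemma hasDerivAt_Fint (hc : Continuous f) (t : ℝ) : HasDerivAt (Fint f) (f t) t :=
  intervalIntegral.integral_hasDerivAt_right (hc.intervalIntegrable 0 t)
    (hc.stronglyMeasurableAtFilter _ _) hc.continuousAt

lemma contFint (hc : Continuous f) : Continuous (Fint f) :=
  continuous_iff_continuousAt.2 fun t => (hasDerivAt_Fint hc t).continuousAt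

lemma Fint_sub (hc : Continuous f) (u v : ℝ) :
    Fint f v - Fint f u = ∫ t in u..v, f t :=
  intervalIntegral.integral_interval_sub_left (hc.intervalIntegrable 0 v)
    (hc.intervalIntegrable 0 u)

lemma hasDerivAt_Phi_fst (hc : Continuous f) {α t : ℝ} (h : t ≠ α) :
    HasDerivAt (fun u => Phi f u α) ((f t - Phi f t α) / (t - α)) t := by
  have hne : t - α ≠ 0 := sub_ne_zero.2 h
  have d1 : HasDerivAt (fun u : ℝ => (u - α)⁻¹) (-1 / (t - α) ^ 2) t :=
    ((hasDerivAt_id t).sub_const α).inv hne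
  have d2 : HasDerivAt (fun u => Fint f u - Fint f α) (f t) t :=
    (hasDerivAt_Fint hc t).sub_const _
  have : HasDerivAt (fun u => (u - α)⁻¹ * (Fint f u - Fint f α)) _ t := d1.mul d2
  convert this using 1
  all_goals simp only [Phi]
  field_simp
  ring

lemma hasDerivAt_Phi_snd (hc : Continuous f) {x α : ℝ} (h : α ≠ x) :
    HasDerivAt (fun β => Phi f x β) ((Phi f x α - f α) / (x - α)) α := by
  have hne : x - α ≠ 0 := sub_ne_zero.2 h.symm
  have d1 : HasDerivAt (fun β : ℝ => (x - β)⁻¹) (-(-1) / (x - α) ^ 2) α :=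
    ((hasDerivAt_id α).const_sub x).inv hne
  have d2 : HasDerivAt (fun β => Fint f x - Fint f β) (-f α) α :=
    (hasDerivAt_Fint hc α).const_sub _
  have : HasDerivAt (fun β => (x - β)⁻¹ * (Fint f x - Fint f β)) _ α := d1.mul d2
  convert this using 1
  all_goals simp only [Phi]
  field_simp
  ring

lemma Hbound (hK : 0 < K) (hf : Cond21 K f) {t α : ℝ} (h : t ≠ α) :
    |f t - Phi f t α| ≤ K * |t - α| := by
  have hc := contf hK hf
  have hne : t - α ≠ 0 := sub_ne_zero.2 h
  have e1 : f t - Phi f t α = (t - α)⁻¹ * (∫ s in α..t, (f t - f s)) := by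
    rw [intervalIntegral.integral_sub intervalIntegrable_const (hc.intervalIntegrable _ _),
      intervalIntegral.integral_const, Phi, Fint_sub hc]
    field_simp
    ring
  rw [e1, abs_mul, abs_inv]
  have hbd : ∀ s ∈ Set.uIoc α t, ‖f t - f s‖ ≤ K * |t - α| := by
    intro s hs
    have h' : |t - s| ≤ |t - α| := by
      rw [Set.mem_uIoc] at hs
      rcases hs with ⟨h1, h2⟩ | ⟨h1, h2⟩
      · rw [abs_of_nonneg (by linarith), abs_of_pos (by linarith : (0:ℝ) < t - α)]
        linarith
      · rw [abs_of_nonpos (by linarith), abs_of_neg (by linarith : t - α < 0)]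
        linarith
    calc |f t - f s| ≤ K * |t - s| := lipf hK hf s t
      _ ≤ K * |t - α| := mul_le_mul_of_nonneg_left h' hK.le
  have := intervalIntegral.norm_integral_le_of_norm_le_const hbd
  rw [Real.norm_eq_abs] at this
  have h2 : |∫ s in α..t, (f t - f s)| ≤ K * |t - α| * |t - α| := this
  have habs : |t - α| ≠ 0 := abs_ne_zero.2 hne
  calc |t - α|⁻¹ * |∫ s in α..t, (f t - f s)| ≤ |t - α|⁻¹ * (K * |t - α| * |t - α|) :=
        mul_le_mul_of_nonneg_left h2 (inv_nonneg.2 (abs_nonneg _))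
    _ = K * |t - α| := by
        field_simp
lemma mvt (hc : Continuous f) {α u v : ℝ} (huv : u < v) (hα : α ∉ Icc u v) :
    ∃ ξ ∈ Ioo u v, Phi f v α - Phi f u α = ((f ξ - Phi f ξ α) / (ξ - α)) * (v - u) := by
  have hado : ∀ t ∈ Icc u v, HasDerivAt (fun w => Phi f w α) ((f t - Phi f t α) / (t - α)) t :=
    fun t ht => hasDerivAt_Phi_fst hc (by rintro rfl; exact hα ht)
  obtain ⟨ξ, hξ, he⟩ := exists_hasDerivAt_eq_slope (fun t => Phi f t α)
    (fun t => (f t - Phi f t α) / (t - α)) huv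
    (fun t ht => ((hado t ht).continuousAt).continuousWithinAt)
    (fun t ht => hado t (Ioo_subset_Icc_self ht))
  refine ⟨ξ, hξ, ?_⟩
  rw [he, div_mul_cancel₀ _ (sub_ne_zero.2 huv.ne')]

lemma mvt' (hc : Continuous f) {α u v : ℝ} (huv : u ≠ v) (hα : α ∉ Icc (u ⊓ v) (u ⊔ v)) :
    ∃ ξ ∈ Ioo (u ⊓ v) (u ⊔ v),
      Phi f v α - Phi f u α = ((f ξ - Phi f ξ α) / (ξ - α)) * (v - u) := by
  rcases huv.lt_or_gt with h | h
  · rw [min_eq_left h.le, max_eq_right h.le]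
    exact mvt hc h (by rwa [min_eq_left h.le, max_eq_right h.le] at hα)
  · rw [min_eq_right h.le, max_eq_left h.le]
    obtain ⟨ξ, hξ, he⟩ := mvt hc h (by rwa [min_eq_right h.le, max_eq_left h.le] at hα)
    exact ⟨ξ, hξ, by linarith [he]⟩

lemma maxSet_le (hK : 0 < K) (hf : Cond21 K f) (y : ℝ) :
    ∀ z ∈ {z : ℝ | ∃ a b : ℝ, a < y ∧ y < b ∧ z = (b - a)⁻¹ * ∫ t in a..b, f t}, z ≤ f 0 := by
  rintro z ⟨a, b, hay, hyb, rfl⟩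
  have hc := contf hK hf
  have hab : (0:ℝ) < b - a := by linarith
  have h1 : ∫ t in a..b, f t ≤ ∫ t in a..b, f 0 :=
    intervalIntegral.integral_mono_on (by linarith) (hc.intervalIntegrable _ _)
      intervalIntegrable_const (fun t _ => f_le_f0 hK hf t)
  rw [intervalIntegral.integral_const, smul_eq_mul] at h1
  calc (b - a)⁻¹ * ∫ t in a..b, f t ≤ (b - a)⁻¹ * ((b - a) * f 0) :=
        mul_le_mul_of_nonneg_left h1 (inv_nonneg.2 hab.le)
    _ = f 0 := by field_simp

lemma Phi_le_maxFn (hK : 0 < K) (hf : Cond21 K f) {y α : ℝ} (h : α ≠ y) :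
    Phi f y α ≤ maxFn f y := by
  have hc := contf hK hf
  have hbdd : BddAbove {z : ℝ | ∃ a b : ℝ, a < y ∧ y < b ∧ z = (b - a)⁻¹ * ∫ t in a..b, f t} :=
    ⟨f 0, fun z hz => maxSet_le hK hf y z hz⟩
  rcases h.lt_or_gt with hlt | hgt
  · have hcont : ContinuousAt (fun b => (b - α)⁻¹ * (Fint f b - Fint f α)) y :=
      ((continuousAt_id.sub continuousAt_const).inv₀
        (sub_ne_zero.2 h.symm)).mul (((contFint hc).continuousAt).sub continuousAt_const)
    have tend : Tendsto (fun b => (b - α)⁻¹ * (Fint f b - Fint f α)) (𝓝[>] y)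
        (𝓝 (Phi f y α)) := hcont.tendsto.mono_left nhdsWithin_le_nhds
    refine le_of_tendsto tend ?_
    filter_upwards [self_mem_nhdsWithin] with b hb
    refine le_csSup hbdd ⟨α, b, hlt, hb, ?_⟩
    rw [Fint_sub hc]
  · have hyα : y - α ≠ 0 := sub_ne_zero.2 (fun he => h (by linarith [he] : α = y))
    have hPhi : Phi f y α = (α - y)⁻¹ * (Fint f α - Fint f y) := by
      rw [Phi]
      have hαy : α - y ≠ 0 := fun he => hyα (by linarith [he])
      field_simp
      ring
    have hcont : ContinuousAt (fun c => (α - c)⁻¹ * (Fint f α - Fint f c)) y :=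
      ((continuousAt_const.sub continuousAt_id).inv₀
        (sub_ne_zero.2 h)).mul (continuousAt_const.sub ((contFint hc).continuousAt))
    have tend : Tendsto (fun c => (α - c)⁻¹ * (Fint f α - Fint f c)) (𝓝[<] y)
        (𝓝 (Phi f y α)) := by
      rw [hPhi]; exact hcont.tendsto.mono_left nhdsWithin_le_nhds
    refine le_of_tendsto tend ?_
    filter_upwards [self_mem_nhdsWithin] with c hcy
    refine le_csSup hbdd ⟨c, α, hcy, hgt, ?_⟩
    rw [Fint_sub hc]

lemma argmax_eq (hK : 0 < K) (hf : Cond21 K f) {a : ℝ → ℝ} (ha : IsArgOf f a) {x : ℝ}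
    (hx : x ≠ 0) : f (a x) = maxFn f x := by
  have hc := contf hK hf
  obtain ⟨hside, heq⟩ := ha x hx
  have hax : a x ≠ x := by
    rcases hx.lt_or_gt with h | h
    · have := hside.2 h; intro he; rw [he] at this; linarith
    · have := hside.1 h; intro he; rw [he] at this; linarith
  have hPhix : Phi f x (a x) = maxFn f x := by rw [heq, Phi, Fint_sub hc]
  have hmax : IsLocalMax (fun β => Phi f x β) (a x) := by
    filter_upwards [eventually_ne_nhds hax] with β hβ
    calc Phi f x β ≤ maxFn f x := Phi_le_maxFn hK hf hβ
      _ = Phi f x (a x) := hPhix.symm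
  have h0 := hmax.hasDerivAt_eq_zero (hasDerivAt_Phi_snd hc hax)
  have hne : x - a x ≠ 0 := sub_ne_zero.2 (Ne.symm hax)
  rw [div_eq_zero_iff] at h0
  rcases h0 with h0 | h0
  · rw [← hPhix]; linarith [sub_eq_zero.mp h0]
  · exact absurd h0 hne
lemma mem_Ioo_abs {u v ξ : ℝ} (h : ξ ∈ Ioo (u ⊓ v) (u ⊔ v)) : |ξ - u| < |v - u| := by
  obtain ⟨h1, h2⟩ := h
  rcases le_total u v with hh | hh
  · rw [min_eq_left hh] at h1; rw [max_eq_right hh] at h2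
    rw [abs_of_pos (by linarith), abs_of_pos (by linarith)]; linarith
  · rw [min_eq_right hh] at h1; rw [max_eq_left hh] at h2
    rw [abs_of_neg (by linarith), abs_of_neg (by linarith)]; linarith

lemma Phi_diff_bound (hK : 0 < K) (hf : Cond21 K f) {α u v : ℝ} (huv : u ≠ v)
    (hα : α ∉ Icc (u ⊓ v) (u ⊔ v)) : |Phi f v α - Phi f u α| ≤ K * |v - u| := by
  obtain ⟨ξ, hξ, he⟩ := mvt' (contf hK hf) huv hα
  rw [he, abs_mul]
  have hne : ξ ≠ α := fun he' => hα (he' ▸ Ioo_subset_Icc_self hξ)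
  have hbd : |(f ξ - Phi f ξ α) / (ξ - α)| ≤ K := by
    rw [abs_div, div_le_iff₀ (abs_pos.2 (sub_ne_zero.2 hne))]
    exact Hbound hK hf hne
  exact mul_le_mul_of_nonneg_right hbd (abs_nonneg _)

lemma maxFn_diff_le (hK : 0 < K) (hf : Cond21 K f) {a : ℝ → ℝ} (ha : IsArgOf f a)
    {x y : ℝ} (hy : y ≠ 0) (hxy : x ≠ y)
    (hay : a y ∉ Icc (x ⊓ y) (x ⊔ y)) (hayx : a y ≠ x) :
    maxFn f y - maxFn f x ≤ K * |y - x| := by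
  have hc := contf hK hf
  have h1 : maxFn f y = Phi f y (a y) := by rw [(ha y hy).2, Phi, Fint_sub hc]
  have h2 : Phi f x (a y) ≤ maxFn f x := Phi_le_maxFn hK hf hayx
  have h3 := Phi_diff_bound hK hf hxy hay
  have h4 := (abs_le.mp h3).2
  linarith

lemma inv_lip (hK : 0 < K) (hf : Cond21 K f) {u v : ℝ}
    (h0 : (0:ℝ) ∉ Icc (u ⊓ v) (u ⊔ v)) : |v - u| ≤ K * |f v - f u| := by
  rcases lt_trichotomy u v with h | h | h
  · have h0' : (0:ℝ) ∉ Ioo u v := by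
      rw [min_eq_left h.le, max_eq_right h.le] at h0
      exact fun hm => h0 (Ioo_subset_Icc_self hm)
    rw [abs_of_pos (by linarith)]
    exact inv_slope hK hf h h0'
  · simp [h]
  · have h0' : (0:ℝ) ∉ Ioo v u := by
      rw [min_eq_right h.le, max_eq_left h.le] at h0
      exact fun hm => h0 (Ioo_subset_Icc_self hm)
    rw [abs_of_neg (by linarith), abs_sub_comm]
    have := inv_slope hK hf h h0'
    linarith

/-- Under condition (2.1), `M f` is differentiable at every `x ≠ 0` with
`(M f)'(x) = (f(x) − M f(x)) / (x − a(x))`. -/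
theorem statement6 (K : ℝ) (hK : 0 < K) (f : ℝ → ℝ) (hf : Cond21 K f)
    (a : ℝ → ℝ) (ha : IsArgOf f a) :
    ∀ x : ℝ, x ≠ 0 →
      HasDerivAt (maxFn f) ((f x - maxFn f x) / (x - a x)) x := by
  intro x hx
  have hc := contf hK hf
  have hsx := (ha x hx).1
  have hPhixA : Phi f x (a x) = maxFn f x := by rw [(ha x hx).2, Phi, Fint_sub hc]
  have hax : a x ≠ x := by
    rcases hx.lt_or_gt with h | h
    · have := hsx.2 h; intro he; rw [he] at this; linarith
    · have := hsx.1 h; intro he; rw [he] at this; linarith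
  have hne : x - a x ≠ 0 := sub_ne_zero.2 (Ne.symm hax)
  rw [hasDerivAt_iff_tendsto_slope, Metric.tendsto_nhdsWithin_nhds]
  intro ε hε
  set A := a x with hA
  set D := (f x - maxFn f x) / (x - a x) with hD
  have hDalt : D = (f x - Phi f x A) / (x - A) := by rw [hD, hPhixA]
  have hHcont : ContinuousAt (fun p : ℝ × ℝ => (f p.1 - Phi f p.1 p.2) / (p.1 - p.2)) (x, A) := by
    apply ContinuousAt.div
    · exact (hc.continuousAt.comp continuousAt_fst).sub
        (((continuousAt_fst.sub continuousAt_snd).inv₀ hne).mul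
          (((contFint hc).continuousAt.comp continuousAt_fst).sub
            ((contFint hc).continuousAt.comp continuousAt_snd)))
    · exact continuousAt_fst.sub continuousAt_snd
    · exact hne
  obtain ⟨δ₁, hδ₁, hball⟩ := Metric.continuousAt_iff.mp hHcont ε hε
  have hK2 : (0:ℝ) < K ^ 2 + 1 := by positivity
  refine ⟨min (δ₁ / (K ^ 2 + 1)) (|x| / 2), by
    have : 0 < |x| := abs_pos.2 hx
    positivity, ?_⟩
  intro y hy hdist
  rw [Real.dist_eq] at hdist
  have hyx : y ≠ x := hy
  have hdist1 : |y - x| < δ₁ / (K ^ 2 + 1) := lt_of_lt_of_le hdist (min_le_left _ _)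
  have hdist2 : |y - x| < |x| / 2 := lt_of_lt_of_le hdist (min_le_right _ _)
  have hdistδ₁ : |y - x| < δ₁ := lt_of_lt_of_le hdist1 (by
    rw [div_le_iff₀ hK2]; nlinarith)
  -- side facts
  obtain ⟨hy0, hAout, hayout, hayx, hAy, h0Icc⟩ :
      y ≠ 0 ∧ A ∉ Icc (x ⊓ y) (x ⊔ y) ∧ a y ∉ Icc (x ⊓ y) (x ⊔ y) ∧ a y ≠ x ∧ A ≠ y ∧
        (0:ℝ) ∉ Icc (A ⊓ a y) (A ⊔ a y) := by
    obtain ⟨hax1, hax2⟩ := hsx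
    rcases hx.lt_or_gt with hneg | hpos
    · -- x < 0
      have hAp : 0 < A := hax2 hneg
      have hy1 : y < 0 := by rw [abs_lt] at hdist2; rw [abs_of_neg hneg] at hdist2; linarith
      have hy0 : y ≠ 0 := ne_of_lt hy1
      have hayp : 0 < a y := ((ha y hy0).1).2 hy1
      have hsup : x ⊔ y < 0 := by simp [hy1, hneg]
      refine ⟨hy0, ?_, ?_, ?_, ?_, ?_⟩
      · intro hm; exact absurd (lt_of_le_of_lt hm.2 hsup) (by linarith)
      · intro hm; exact absurd (lt_of_le_of_lt hm.2 hsup) (by linarith)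
      · intro he; rw [he] at hayp; linarith
      · intro he; rw [he] at hAp; linarith
      · intro hm
        have : 0 < A ⊓ a y := lt_min hAp hayp
        linarith [hm.1]
    · -- 0 < x
      have hAn : A < 0 := hax1 hpos
      have hy1 : 0 < y := by rw [abs_lt] at hdist2; rw [abs_of_pos hpos] at hdist2; linarith
      have hy0 : y ≠ 0 := ne_of_gt hy1
      have hayn : a y < 0 := ((ha y hy0).1).1 hy1
      have hinf : 0 < x ⊓ y := lt_min hpos hy1
      refine ⟨hy0, ?_, ?_, ?_, ?_, ?_⟩
      · intro hm; linarith [hm.1]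
      · intro hm; linarith [hm.1]
      · intro he; rw [he] at hayn; linarith
      · intro he; rw [he] at hAn; linarith
      · intro hm
        have : A ⊔ a y < 0 := max_lt hAn hayn
        linarith [hm.2]
  -- symmetric versions
  have hAout' : A ∉ Icc (y ⊓ x) (y ⊔ x) := by rwa [inf_comm, sup_comm] at hAout
  have hAx : A ≠ x := hax
  -- values of maxFn
  have h1 : maxFn f y = Phi f y (a y) := by rw [(ha y hy0).2, Phi, Fint_sub hc]
  have h2 : Phi f x (a y) ≤ maxFn f x := Phi_le_maxFn hK hf hayx
  have h3 : Phi f y A ≤ maxFn f y := Phi_le_maxFn hK hf hAy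
  -- Lipschitz bound on maxFn
  have hlipM : |maxFn f y - maxFn f x| ≤ K * |y - x| := by
    have hu := maxFn_diff_le hK hf ha hy0 (Ne.symm hyx) hayout hayx
    have hl := maxFn_diff_le hK hf ha hx hyx hAout' hAy
    rw [abs_sub_comm x y] at hl
    rw [abs_le]; constructor <;> linarith
  -- a is Lipschitz
  have haylip : |a y - A| < δ₁ := by
    have hstep : |a y - A| ≤ K * |f (a y) - f A| := inv_lip hK hf h0Icc
    have hfa : f (a y) = maxFn f y := argmax_eq hK hf ha hy0
    have hfA : f A = maxFn f x := argmax_eq hK hf ha hx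
    rw [hfa, hfA] at hstep
    calc |a y - A| ≤ K * (K * |y - x|) := le_trans hstep (by
          exact mul_le_mul_of_nonneg_left hlipM hK.le)
      _ = K ^ 2 * |y - x| := by ring
      _ < K ^ 2 * (δ₁ / (K ^ 2 + 1)) + δ₁ / (K ^ 2 + 1) := by
          nlinarith [abs_nonneg (y - x), sq_nonneg K]
      _ = (K ^ 2 + 1) * (δ₁ / (K ^ 2 + 1)) := by ring
      _ = δ₁ := by field_simp
  -- MVT representations
  obtain ⟨ξ₁, hξ₁, he₁⟩ := mvt' hc (Ne.symm hyx) hAout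
  obtain ⟨ξ₂, hξ₂, he₂⟩ := mvt' hc (Ne.symm hyx) hayout
  have hξ₁x : |ξ₁ - x| < δ₁ := lt_trans (mem_Ioo_abs hξ₁) hdistδ₁
  have hξ₂x : |ξ₂ - x| < δ₁ := lt_trans (mem_Ioo_abs hξ₂) hdistδ₁
  -- bounds via continuity
  have hb₁ : |(f ξ₁ - Phi f ξ₁ A) / (ξ₁ - A) - D| < ε := by
    have := hball (x := (ξ₁, A)) (by
      rw [Prod.dist_eq]
      simp only [Real.dist_eq, sub_self, abs_zero]
      exact max_lt hξ₁x hδ₁)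
    rw [Real.dist_eq] at this
    rwa [hDalt]
  have hb₂ : |(f ξ₂ - Phi f ξ₂ (a y)) / (ξ₂ - a y) - D| < ε := by
    have := hball (x := (ξ₂, a y)) (by
      rw [Prod.dist_eq]
      simp only [Real.dist_eq]
      exact max_lt hξ₂x haylip)
    rw [Real.dist_eq] at this
    rwa [hDalt]
  -- put together
  rw [Real.dist_eq, slope_def_field]
  set H₁ := (f ξ₁ - Phi f ξ₁ A) / (ξ₁ - A) with hH₁
  set H₂ := (f ξ₂ - Phi f ξ₂ (a y)) / (ξ₂ - a y) with hH₂
  have hlow : H₁ * (y - x) ≤ maxFn f y - maxFn f x := by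
    rw [← he₁]; linarith
  have hup : maxFn f y - maxFn f x ≤ H₂ * (y - x) := by
    rw [← he₂]; linarith
  rw [abs_lt] at hb₁ hb₂ ⊢
  rcases hyx.lt_or_gt with hlt | hgt
  · -- y < x : H₂ ≤ slope ≤ H₁
    have hpos : 0 < x - y := by linarith
    rw [show (maxFn f y - maxFn f x) / (y - x) = (maxFn f x - maxFn f y) / (x - y) by
      rw [← neg_div_neg_eq]; ring_nf]
    have e₁ : H₁ * (x - y) = -(H₁ * (y - x)) := by ring
    have e₂ : H₂ * (x - y) = -(H₂ * (y - x)) := by ring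
    have hs1 : (maxFn f x - maxFn f y) / (x - y) ≤ H₁ :=
      (div_le_iff₀ hpos).mpr (by linarith)
    have hs2 : H₂ ≤ (maxFn f x - maxFn f y) / (x - y) :=
      (le_div_iff₀ hpos).mpr (by linarith)
    constructor <;> linarith
  · have hpos : 0 < y - x := by linarith
    have hs1 : H₁ ≤ (maxFn f y - maxFn f x) / (y - x) := (le_div_iff₀ hpos).mpr hlow
    have hs2 : (maxFn f y - maxFn f x) / (y - x) ≤ H₂ := (div_le_iff₀ hpos).mpr hup
    constructor <;> linarith
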